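/- arXiv:2306.12222 — 2 statements merged into one kernel-verified Lean document; each statement's English description precedes it below -/
import Mathlib

section
/- Let r ≥ 4 be an integer, let δ ∈ {0,1}, let k ≥ C(r,2) + δ be an integer, and let s, j be integers with 3 ≤ s ≤ r−1 and 2 ≤ j ≤ s. Then j·(a_{r,s} + j − 2) − k·(j−1) ≤ a_{r,s+1} − δ. -/
/-- `a_{r,s} = C(r,2) − C(s+1,2) + 2` for `s < r`, with `a_{r,r} = 1`. -/
def aWt (r s : ℕ) : ℕ := if s = r then 1 else r.choose 2 - (s + 1).choose 2 + 2

/-!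
With `m = C(r,2)` and `T = C(s+1,2)` we have `a_{r,s} = m - T + 2` and
`a_{r,s+1} ≥ m - T - (s+1) + 2`. Replacing `k` by its lower bound `m + δ` turns the claim into
`j² + s - 1 - δ(j-2) ≤ (j-1)·T`, and `j² + s - 1 ≤ (j-1)·T` already holds for `2 ≤ j ≤ s`, `3 ≤ s`.
-/

theorem choose_two_add_one (n : ℕ) : (n + 1).choose 2 = n.choose 2 + n := by
  rw [Nat.choose_succ_succ', Nat.choose_one_right, add_comm]

theorem aWt_of_lt {r s : ℕ} (h : s < r) :
    (aWt r s : ℤ) = r.choose 2 - (s + 1).choose 2 + 2 := by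
  have hle : (s + 1).choose 2 ≤ r.choose 2 := Nat.choose_le_choose 2 h
  simp only [aWt, if_neg h.ne]
  push_cast [Nat.cast_sub hle]
  ring

theorem choose_two_sub_le_aWt {r s : ℕ} (h : s ≤ r) (hs : 0 < s) :
    (r.choose 2 : ℤ) - (s + 1).choose 2 + 2 ≤ aWt r s := by
  rcases h.lt_or_eq with h | rfl
  · exact (aWt_of_lt h).ge
  · simp only [aWt, choose_two_add_one]
    push_cast
    omega

theorem sq_add_sub_one_le_mul_choose_two {j s : ℕ} (hj : 2 ≤ j) (hjs : j ≤ s) (hs : 3 ≤ s) :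
    (j : ℤ) ^ 2 + s - 1 ≤ (j - 1) * (s + 1).choose 2 := by
  have htwo : ((s + 1).choose 2 : ℤ) * 2 = (s + 1) * s := by
    have h := Nat.add_one_mul_choose_eq s 1
    rw [Nat.choose_one_right] at h
    exact_mod_cast h.symm
  have hj' : (2 : ℤ) ≤ j := by exact_mod_cast hj
  have hjs' : (j : ℤ) ≤ s := by exact_mod_cast hjs
  have hs' : (3 : ℤ) ≤ s := by exact_mod_cast hs
  -- `(j-1)·s(s+1) - 2(j² + s - 1) = (j-1)(s-3)(s+2) + 2(j-2)(s-j)`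
  nlinarith [mul_nonneg (mul_nonneg (by linarith : (0 : ℤ) ≤ j - 1) (by linarith : (0 : ℤ) ≤ s - 3))
      (by linarith : (0 : ℤ) ≤ s + 2),
    mul_nonneg (by linarith : (0 : ℤ) ≤ j - 2) (by linarith : (0 : ℤ) ≤ s - j)]

theorem convexity_bound_general (r s j δ k : ℕ) (hk : r.choose 2 + δ ≤ k) (hs : 3 ≤ s) (hsr : s ≤ r - 1)
    (hj : 2 ≤ j) (hjs : j ≤ s) :
    (j : ℤ) * ((aWt r s : ℤ) + (j : ℤ) - 2) - (k : ℤ) * ((j : ℤ) - 1) ≤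
      (aWt r (s + 1) : ℤ) - (δ : ℤ) := by
  have hsr' : s < r := by omega
  have hk' : ((r.choose 2 : ℤ) + δ) * (j - 1) ≤ k * (j - 1) :=
    mul_le_mul_of_nonneg_right (by exact_mod_cast hk) (by omega)
  have hδj : (0 : ℤ) ≤ δ * (j - 2) := mul_nonneg (by positivity) (by omega)
  have hkey := sq_add_sub_one_le_mul_choose_two hj hjs hs
  have hnext := choose_two_sub_le_aWt hsr' (Nat.succ_pos s)
  rw [choose_two_add_one (s + 1)] at hnext
  push_cast at hnext
  rw [aWt_of_lt hsr']
  linarith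

/-- For `r ≥ 4`, `δ ∈ {0,1}`, `k ≥ C(r,2)+δ`, `3 ≤ s ≤ r−1` and `2 ≤ j ≤ s`,
`j·(a_{r,s} + j − 2) − k·(j−1) ≤ a_{r,s+1} − δ`. -/
theorem convexity_bound (r s j δ k : ℕ) (hr : 4 ≤ r) (hδ : δ = 0 ∨ δ = 1)
    (hk : r.choose 2 + δ ≤ k) (hs : 3 ≤ s) (hsr : s ≤ r - 1) (hj : 2 ≤ j) (hjs : j ≤ s) :
    (j : ℤ) * ((aWt r s : ℤ) + (j : ℤ) - 2) - (k : ℤ) * ((j : ℤ) - 1) ≤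
      (aWt r (s + 1) : ℤ) - (δ : ℤ) :=
  convexity_bound_general r s j δ k hk hs hsr hj hjs
end

section
/- Let n, k, r be positive integers with r ≥ 3, and let G_1, …, G_k be simple graphs on the vertex set [n] with nested edge sets G_k ⊆ G_{k−1} ⊆ … ⊆ G_1. Define f(e) = |{ i ∈ [k] : e is an edge of G_i }| for every edge e of the complete graph K_n on [n]. If the family (G_1, …, G_k) is rainbow K_r-free, then no r-clique of K_n has weight sequence bound (1, 2, …, C(r,2)) with respect to the weighting f. -/
open Finset SimpleGraph

/-- A family `G_1, …, G_k` of simple graphs on `[n]` is rainbow `K_r`-free. -/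
def RainbowCliqueFree (n k r : ℕ) (G : Fin k → SimpleGraph (Fin n)) : Prop :=
  ¬ ∃ (S : Finset (Fin n)) (c : Sym2 (Fin n) → Fin k),
      S.card = r ∧
      Set.InjOn c {e : Sym2 (Fin n) | ¬ e.IsDiag ∧ ∀ v ∈ e, v ∈ S} ∧
      ∀ u ∈ S, ∀ v ∈ S, u ≠ v → (G (c s(u, v))).Adj u v

/-- The `r`-clique `S` has weight sequence bound `(1, 2, …, C(r,2))` w.r.t. `f`. -/
def HasWSB (n r : ℕ) (f : Sym2 (Fin n) → ℕ) (S : Finset (Fin n)) : Prop :=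
  ∃ g : Fin (r.choose 2) → Sym2 (Fin n),
    Function.Injective g ∧
    (∀ i, ¬ (g i).IsDiag ∧ ∀ v ∈ g i, v ∈ S) ∧
    ∀ i : Fin (r.choose 2), (i : ℕ) + 1 ≤ f (g i)

/-!
Nestedness makes `{i | e ∈ G_i}` an initial segment of `[k]`, so `f(e) ≥ i` means that `e`
lies in `G_i`. An enumeration `e_1, …, e_{C(r,2)}` of the edges of `S` with `f(e_i) ≥ i`
therefore puts each `e_i` into `G_i`, and colouring `e_i` by `i` is a rainbow copy of `K_r`.
-/

theorem Finset.card_sym2_filter_not_isDiag {α : Type*} [DecidableEq α] (s : Finset α) :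
    #{e ∈ s.sym2 | ¬ e.IsDiag} = (#s).choose 2 := by
  rw [sym2_eq_image, Sym2.filter_image_mk_not_isDiag, Sym2.card_image_offDiag]

theorem Antitone.mem_of_lt_ncard {α : Type*} {k : ℕ} {A : Fin k → Set α} (hA : Antitone A)
    {x : α} {j : Fin k} (hj : (j : ℕ) < {i | x ∈ A i}.ncard) : x ∈ A j := by
  by_contra hxj
  have hsub : {i | x ∈ A i} ⊆ ↑(Iio j) := fun i hi => by
    by_contra hij
    exact hxj (hA (not_lt.1 (by simpa using hij)) hi)
  have := Set.ncard_le_ncard hsub (Iio j).finite_toSet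
  rw [Set.ncard_coe_finset, Fin.card_Iio] at this
  omega

theorem not_rainbowCliqueFree_of_injective_enum {n k r : ℕ} (hr : 2 ≤ r)
    {G : Fin k → SimpleGraph (Fin n)} {S : Finset (Fin n)} (hS : #S = r)
    {g : Fin (r.choose 2) → Sym2 (Fin n)} (hg : Function.Injective g)
    (hgS : ∀ i, ¬ (g i).IsDiag ∧ ∀ v ∈ g i, v ∈ S)
    {σ : Fin (r.choose 2) → Fin k} (hσ : Function.Injective σ)
    (hgσ : ∀ i, g i ∈ (G (σ i)).edgeSet) : ¬ RainbowCliqueFree n k r G := by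
  classical
  set T := {e ∈ S.sym2 | ¬ e.IsDiag}
  have hmemT : ∀ e, e ∈ T ↔ ¬ e.IsDiag ∧ ∀ v ∈ e, v ∈ S := by
    simp [T, mem_sym2_iff, and_comm]
  have hsurj : Set.SurjOn g Set.univ T := by
    simpa using Finset.surjOn_of_injOn_of_card_le (s := univ) g
      (fun i _ => (hmemT _).2 (hgS i)) hg.injOn (by simp [T, card_sym2_filter_not_isDiag, hS])
  have : Nonempty (Fin (r.choose 2)) := ⟨⟨0, Nat.choose_pos hr⟩⟩
  have hinv := hsurj.rightInvOn_invFunOn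
  refine fun hfree => hfree ⟨S, σ ∘ Function.invFunOn g Set.univ, hS, ?_, ?_⟩
  · exact hσ.comp_injOn (hinv.injOn.mono fun e he => (hmemT e).2 he)
  · intro u hu v hv huv
    have he : s(u, v) ∈ T := by simp [T, hu, hv, huv]
    simpa [hinv he] using hgσ (Function.invFunOn g Set.univ s(u, v))

theorem nested_rainbowFree_no_wsb_general (n k r : ℕ) (hr : 3 ≤ r)
    (G : Fin k → SimpleGraph (Fin n))
    (hnested : ∀ i j : Fin k, i ≤ j → (G j).edgeSet ⊆ (G i).edgeSet)
    (f : Sym2 (Fin n) → ℕ)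
    (hf : ∀ e : Sym2 (Fin n), f e = Set.ncard {i : Fin k | e ∈ (G i).edgeSet})
    (hG : RainbowCliqueFree n k r G) :
    ∀ S : Finset (Fin n), S.card = r → ¬ HasWSB n r f S := by
  rintro S hS ⟨g, hg, hgS, hgf⟩
  have hlt : ∀ i : Fin (r.choose 2), (i : ℕ) < {j : Fin k | g i ∈ (G j).edgeSet}.ncard :=
    fun i => hf (g i) ▸ hgf i
  have hik : ∀ i : Fin (r.choose 2), (i : ℕ) < k := fun i =>
    (hlt i).trans_le ((Set.ncard_le_card _).trans_eq (Nat.card_fin k))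
  exact not_rainbowCliqueFree_of_injective_enum (by omega) hS hg hgS
    (σ := fun i => ⟨i, hik i⟩) (fun i j h => Fin.ext (Fin.mk.inj h))
    (fun i => Antitone.mem_of_lt_ncard hnested (hlt i)) hG

/-- If `G_k ⊆ … ⊆ G_1` are nested graphs on `[n]`, `f(e)` counts the graphs containing `e`,
and the family is rainbow `K_r`-free, then no `r`-clique of `K_n` has weight sequence
bound `(1, 2, …, C(r,2))` with respect to `f`. -/
theorem nested_rainbowFree_no_wsb (n k r : ℕ) (hn : 1 ≤ n) (hk : 1 ≤ k) (hr : 3 ≤ r)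
    (G : Fin k → SimpleGraph (Fin n))
    (hnested : ∀ i j : Fin k, i ≤ j → (G j).edgeSet ⊆ (G i).edgeSet)
    (f : Sym2 (Fin n) → ℕ)
    (hf : ∀ e : Sym2 (Fin n), f e = Set.ncard {i : Fin k | e ∈ (G i).edgeSet})
    (hG : RainbowCliqueFree n k r G) :
    ∀ S : Finset (Fin n), S.card = r → ¬ HasWSB n r f S :=
  nested_rainbowFree_no_wsb_general n k r hr G hnested f hf hG
end
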